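/- arXiv:1710.05296 — 2 statements merged into one kernel-verified Lean document; each statement's English description precedes it below -/
import Mathlib

section
/- Let κ be an uncountable regular cardinal. A CW complex X is locally less than κ if and only if each connected component of X contains fewer than κ many cells. -/
open Set Metric Topology

/-- Eventual domination of functions `ℕ → ℕ`. -/
def EvDom (f g : ℕ → ℕ) : Prop := ∀ᶠ n in Filter.atTop, f n ≤ g n

/-- The bounding number `𝔟`: the least cardinality of a family of functions `ℕ → ℕ`
unbounded with respect to eventual domination. -/
noncomputable def boundingNumber : Cardinal :=
  sInf {c : Cardinal | ∃ F : Set (ℕ → ℕ), Cardinal.mk F = c ∧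
    ∀ g : ℕ → ℕ, ∃ f ∈ F, ¬ EvDom f g}

/-- A cell decomposition of a Hausdorff space: characteristic maps from closed discs,
restricting to homeomorphisms onto their images on the open discs, with the open cells
partitioning the space, satisfying closure-finiteness. -/
structure CellStruct (X : Type) [TopologicalSpace X] where
  ι : Type
  dim : ι → ℕ
  map : (i : ι) → EuclideanSpace ℝ (Fin (dim i)) → X
  continuousOn : ∀ i, ContinuousOn (map i) (closedBall 0 1)
  isEmbedding : ∀ i, IsEmbedding ((ball (0 : EuclideanSpace ℝ (Fin (dim i))) 1).restrict (map i))
  pairwiseDisjoint :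
    Pairwise fun i j => Disjoint (map i '' ball 0 1) (map j '' ball 0 1)
  iUnion_eq : ⋃ i, map i '' ball 0 1 = univ
  closureFinite : ∀ i, ∃ F : Finset ι, (∀ j ∈ F, dim j < dim i) ∧
    map i '' sphere 0 1 ⊆ ⋃ j ∈ F, map j '' ball 0 1

namespace CellStruct

variable {X : Type} [TopologicalSpace X]

/-- The open cell with index `i`. -/
def openCell (C : CellStruct X) (i : C.ι) : Set X := C.map i '' ball 0 1

/-- The closed cell with index `i`. -/
def closedCell (C : CellStruct X) (i : C.ι) : Set X := C.map i '' closedBall 0 1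

/-- The image of the boundary sphere of the cell with index `i`. -/
def sphereImage (C : CellStruct X) (i : C.ι) : Set X := C.map i '' sphere 0 1

/-- The cell structure has the weak topology: a set is closed iff its intersection with
every closed cell is closed. -/
def HasWeakTopology (C : CellStruct X) : Prop :=
  ∀ A : Set X, IsClosed A ↔ ∀ i, IsClosed (A ∩ C.closedCell i)

end CellStruct

/-- A CW structure on a (Hausdorff) space: a cell decomposition with closure-finiteness,
such that the topology is the weak topology determined by the closed cells. -/
structure CWStruct (X : Type) [TopologicalSpace X] extends CellStruct X where
  weakTopology : toCellStruct.HasWeakTopology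

namespace CWStruct

variable {X : Type} [TopologicalSpace X]

/-- A subcomplex: a union of open cells containing the closure of each of its cells. -/
def IsSubcomplex (C : CWStruct X) (A : Set X) : Prop :=
  (∃ J : Set C.ι, A = ⋃ j ∈ J, C.openCell j) ∧
    ∀ i, C.openCell i ⊆ A → C.closedCell i ⊆ A

/-- The set of (indices of) cells of a subcomplex `A`. -/
def cells (C : CWStruct X) (A : Set X) : Set C.ι := {i | C.openCell i ⊆ A}

/-- `X` is locally less than `κ`: every point is in the interior of a subcomplex
with fewer than `κ` many cells. -/
def LocallyLT (C : CWStruct X) (κ : Cardinal) : Prop :=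
  ∀ x : X, ∃ A : Set X, C.IsSubcomplex A ∧ Cardinal.mk (C.cells A) < κ ∧ x ∈ interior A

/-- Locally finite: every point is in the interior of a finite subcomplex. -/
def LocallyFinite (C : CWStruct X) : Prop := C.LocallyLT Cardinal.aleph0

/-- Locally countable: every point is in the interior of a countable subcomplex. -/
def LocallyCountable (C : CWStruct X) : Prop := C.LocallyLT (Cardinal.aleph 1)

end CWStruct

/-- `E` is a CW structure on `X × Y` (with the product topology) whose cells are
exactly the products of cells of `C` and `D`, with the corresponding dimensions.
The existence of such an `E` expresses that the product topology on `X × Y`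
makes it a CW complex with the product cell structure. -/
def IsProductCWStruct {X Y : Type} [TopologicalSpace X] [TopologicalSpace Y]
    (C : CWStruct X) (D : CWStruct Y) (E : CWStruct (X × Y)) : Prop :=
  (∀ k : E.ι, ∃ (a : C.ι) (b : D.ι),
      E.openCell k = C.openCell a ×ˢ D.openCell b ∧ E.dim k = C.dim a + D.dim b) ∧
  (∀ (a : C.ι) (b : D.ι), ∃ k : E.ι, E.openCell k = C.openCell a ×ˢ D.openCell b)

/-- A space is compactly generated: a set is closed whenever its intersection with
every compact subset is closed in the subspace topology. -/
def IsKSpace (X : Type) [TopologicalSpace X] : Prop :=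
  ∀ A : Set X, (∀ K : Set X, IsCompact K → IsClosed ((Subtype.val ⁻¹' A : Set K))) → IsClosed A

namespace CWStruct

variable {X : Type} [TopologicalSpace X]

/-- The collar neighbourhood `C^e_n(U)` inside the closed cell `e`:
the image of `{t • z : t ∈ (n/(n+1), 1], z ∈ Sᵈ, φ_e z ∈ U}` under `φ_e`. -/
noncomputable def collar (C : CWStruct X) (e : C.ι) (n : ℕ) (U : Set X) : Set X :=
  C.map e '' {p | ∃ t ∈ Set.Ioc ((n : ℝ) / (n + 1)) 1,
    ∃ z : EuclideanSpace ℝ (Fin (C.dim e)), ‖z‖ = 1 ∧ C.map e z ∈ U ∧ p = t • z}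

/-- The basic neighbourhood `B_n(x)` of `x = φ_{i₀} z` inside its open cell: the image of
the open ball about `z` of radius `min (1/(n+1)) ((1 - ‖z‖)/2)`. -/
noncomputable def ballNbhd (C : CWStruct X) (i₀ : C.ι)
    (z : EuclideanSpace ℝ (Fin (C.dim i₀))) (n : ℕ) : Set X :=
  C.map i₀ '' Metric.ball z (min (1 / (n + 1)) ((1 - ‖z‖) / 2))

open Classical in
/-- The part of the neighbourhood `U_f(x)` lying in the `n`-skeleton, defined by recursion
on dimension: start with `B_{f i₀}(x)` in dimension `dim i₀` (with the empty set in every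
other cell of dimension at most `dim i₀`), and extend through each cell of each higher
dimension by the collar neighbourhoods `C^e_{f e}(·)`. -/
noncomputable def nbhdSkel (C : CWStruct X) (i₀ : C.ι)
    (z : EuclideanSpace ℝ (Fin (C.dim i₀))) (f : C.ι → ℕ) : ℕ → Set X
  | 0 => if C.dim i₀ = 0 then C.ballNbhd i₀ z (f i₀) else ∅
  | n + 1 =>
      (if C.dim i₀ = n + 1 then C.ballNbhd i₀ z (f i₀) else ∅) ∪
      C.nbhdSkel i₀ z f n ∪
      ⋃ e : C.ι, if C.dim e = n + 1 then C.collar e (f e) (C.nbhdSkel i₀ z f n) else ∅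

/-- The open neighbourhood `U_f(x)` of `x = φ_{i₀} z` determined by `f : ι → ℕ`. -/
noncomputable def nbhd (C : CWStruct X) (i₀ : C.ι)
    (z : EuclideanSpace ℝ (Fin (C.dim i₀))) (f : C.ι → ℕ) : Set X :=
  ⋃ n, C.nbhdSkel i₀ z f n

end CWStruct


/-!
Components are subcomplexes, and they are open because every closed cell is connected, so it
lies in a single component. Conversely, by compactness every closed cell lies in the interior
of a subcomplex with fewer than `κ` cells; closing the cells of a small neighbourhood of `x`
under this assignment, in countably many rounds, gives by regularity of `κ > ℵ₀` a subcomplex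
with fewer than `κ` cells which is open, hence clopen, hence contains the component of `x`.
-/

open Cardinal

theorem Cardinal.exists_superset_biUnion_subset_lt_of_isRegular {α : Type*} {κ : Cardinal}
    (hκ : ℵ₀ < κ) (hreg : κ.IsRegular) (g : α → Set α) (hg : ∀ a, #(g a) < κ)
    {S₀ : Set α} (hS₀ : #S₀ < κ) :
    ∃ S, S₀ ⊆ S ∧ ⋃ a ∈ S, g a ⊆ S ∧ #S < κ := by
  set step : Set α → Set α := fun T => ⋃ a ∈ T, g a
  have hstep : ∀ n, #(step^[n] S₀) < κ := by
    intro n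
    induction n with
    | zero => exact hS₀
    | succ n ih =>
      rw [Function.iterate_succ_apply']
      exact (card_biUnion_lt_iff_forall_of_isRegular hreg ih).2 fun a _ => hg a
  refine ⟨⋃ n, step^[n] S₀, subset_iUnion (step^[·] S₀) 0, ?_, ?_⟩
  · refine iUnion₂_subset fun a ha => ?_
    obtain ⟨n, hn⟩ := mem_iUnion.1 ha
    refine Subset.trans ?_ (subset_iUnion _ (n + 1))
    rw [Function.iterate_succ_apply']
    exact subset_biUnion_of_mem hn
  · rw [← Function.Surjective.iUnion_comp Equiv.ulift.surjective (step^[·] S₀)]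
    exact (card_iUnion_lt_iff_forall_of_isRegular hreg (by simpa using hκ)).2 fun n => hstep _

namespace CWStruct

variable {X : Type} [TopologicalSpace X] (C : CWStruct X)

def unionCells (S : Set C.ι) : Set X := ⋃ j ∈ S, C.openCell j

lemma openCell_nonempty (i : C.ι) : (C.openCell i).Nonempty :=
  (nonempty_ball.2 one_pos).image _

lemma openCell_subset_closedCell (i : C.ι) : C.openCell i ⊆ C.closedCell i :=
  image_mono ball_subset_closedBall

lemma isCompact_closedCell (i : C.ι) : IsCompact (C.closedCell i) :=
  (isCompact_closedBall _ _).image_of_continuousOn (C.continuousOn i)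

lemma isPreconnected_closedCell (i : C.ι) : IsPreconnected (C.closedCell i) :=
  (convex_closedBall _ _).isPreconnected.image _ (C.continuousOn i)

lemma exists_mem_openCell (y : X) : ∃ i, y ∈ C.openCell i :=
  mem_iUnion.1 (C.iUnion_eq.symm ▸ mem_univ y)

lemma closedCell_subset_biUnion_openCell (i : C.ι) :
    ∃ F : Finset C.ι, C.closedCell i ⊆ ⋃ j ∈ F, C.openCell j := by
  classical
  obtain ⟨F, -, hF⟩ := C.closureFinite i
  refine ⟨insert i F, ?_⟩
  show C.map i '' closedBall 0 1 ⊆ _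
  rw [← ball_union_sphere, image_union, Finset.set_biUnion_insert]
  exact union_subset_union_right _ hF

variable {C}

lemma mem_unionCells {S : Set C.ι} {y : X} : y ∈ C.unionCells S ↔ ∃ j ∈ S, y ∈ C.openCell j :=
  mem_iUnion₂.trans <| by simp only [exists_prop]

lemma unionCells_mono {S T : Set C.ι} (h : S ⊆ T) : C.unionCells S ⊆ C.unionCells T :=
  biUnion_subset_biUnion_left h

lemma eq_of_mem_openCell {i j : C.ι} {y : X} (hi : y ∈ C.openCell i) (hj : y ∈ C.openCell j) :
    i = j :=
  by_contra fun h => disjoint_left.1 (C.pairwiseDisjoint h) hi hj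

lemma mem_of_mem_openCell_of_mem_unionCells {S : Set C.ι} {i : C.ι} {y : X}
    (hi : y ∈ C.openCell i) (hS : y ∈ C.unionCells S) : i ∈ S := by
  obtain ⟨j, hj, hy⟩ := mem_unionCells.1 hS
  rwa [eq_of_mem_openCell hi hy]

variable (C)

lemma cells_unionCells (S : Set C.ι) : C.cells (C.unionCells S) = S := by
  ext i
  refine ⟨fun hi => ?_, fun hi => subset_biUnion_of_mem (u := C.openCell) hi⟩
  obtain ⟨y, hy⟩ := C.openCell_nonempty i
  exact mem_of_mem_openCell_of_mem_unionCells hy (hi hy)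

lemma unionCells_cells_eq {A : Set X}
    (hA : ∀ i, (C.openCell i ∩ A).Nonempty → C.openCell i ⊆ A) :
    C.unionCells (C.cells A) = A := by
  refine Subset.antisymm (iUnion₂_subset fun j hj => hj) fun y hy => ?_
  obtain ⟨i, hi⟩ := C.exists_mem_openCell y
  exact mem_unionCells.2 ⟨i, hA i ⟨y, hi, hy⟩, hi⟩

lemma isSubcomplex_iff {A : Set X} :
    C.IsSubcomplex A ↔ ∀ i, (C.openCell i ∩ A).Nonempty → C.closedCell i ⊆ A := by
  constructor
  · rintro ⟨⟨J, rfl⟩, hclosed⟩ i ⟨y, hyi, hyA⟩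
    have hiJ : i ∈ J := mem_of_mem_openCell_of_mem_unionCells hyi hyA
    exact hclosed i (subset_biUnion_of_mem (u := C.openCell) hiJ)
  · intro h
    have hopen : ∀ i, (C.openCell i ∩ A).Nonempty → C.openCell i ⊆ A :=
      fun i hi => (C.openCell_subset_closedCell i).trans (h i hi)
    refine ⟨⟨C.cells A, (C.unionCells_cells_eq hopen).symm⟩, fun i hi => h i ?_⟩
    exact (C.openCell_nonempty i).mono (subset_inter subset_rfl hi)

variable {C}

lemma IsSubcomplex.unionCells_cells {A : Set X} (hA : C.IsSubcomplex A) :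
    C.unionCells (C.cells A) = A :=
  C.unionCells_cells_eq fun i hi =>
    (C.openCell_subset_closedCell i).trans (C.isSubcomplex_iff.1 hA i hi)

lemma closedCell_subset_connectedComponent {i : C.ι} {x : X}
    (h : (C.closedCell i ∩ connectedComponent x).Nonempty) :
    C.closedCell i ⊆ connectedComponent x := by
  obtain ⟨y, hyi, hyx⟩ := h
  rw [connectedComponent_eq hyx]
  exact (C.isPreconnected_closedCell i).subset_connectedComponent hyi

lemma LocallyLT.exists_cells_lt_subset_interior {κ : Cardinal} (h : C.LocallyLT κ)
    (hreg : κ.IsRegular) {K : Set X} (hK : IsCompact K) :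
    ∃ T : Set C.ι, #T < κ ∧ K ⊆ interior (C.unionCells T) := by
  choose A hA hAcard hxA using h
  obtain ⟨t, ht⟩ := hK.elim_finite_subcover (fun y => interior (A y)) (fun _ => isOpen_interior)
    fun x _ => mem_iUnion.2 ⟨x, hxA x⟩
  refine ⟨⋃ y ∈ (t : Set X), C.cells (A y), ?_, ht.trans <| iUnion₂_subset fun y hy => ?_⟩
  · have ht_lt : #(t : Set X) < κ := (lt_aleph0_of_finite _).trans_le hreg.aleph0_le
    exact (card_biUnion_lt_iff_forall_of_isRegular hreg ht_lt).2 fun y _ => hAcard y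
  · refine interior_mono ?_
    rw [← (hA y).unionCells_cells]
    exact unionCells_mono (subset_biUnion_of_mem (u := fun y => C.cells (A y)) hy)

variable (C)

lemma isSubcomplex_connectedComponent (x : X) : C.IsSubcomplex (connectedComponent x) :=
  C.isSubcomplex_iff.2 fun i ⟨y, hyi, hyx⟩ =>
    closedCell_subset_connectedComponent ⟨y, C.openCell_subset_closedCell i hyi, hyx⟩

section T2

variable [T2Space X]

lemma isClosed_closedCell (i : C.ι) : IsClosed (C.closedCell i) :=
  (C.isCompact_closedCell i).isClosed

include C in
lemma isOpen_connectedComponent (x : X) : IsOpen (connectedComponent x) := by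
  rw [← isClosed_compl_iff, C.weakTopology]
  intro i
  by_cases h : (C.closedCell i ∩ connectedComponent x).Nonempty
  · rw [(disjoint_compl_left.mono_right (closedCell_subset_connectedComponent h)).inter_eq]
    exact isClosed_empty
  · have hcompl : C.closedCell i ⊆ (connectedComponent x)ᶜ := fun y hyi hyx => h ⟨y, hyi, hyx⟩
    rw [inter_eq_right.2 hcompl]
    exact C.isClosed_closedCell i

variable {C}

/-- By closure-finiteness, `A ∩ closedCell i` is a finite union of closed sets. -/
lemma IsSubcomplex.isClosed {A : Set X} (hA : C.IsSubcomplex A) : IsClosed A := by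
  classical
  rw [C.weakTopology]
  intro i
  obtain ⟨F, hF⟩ := C.closedCell_subset_biUnion_openCell i
  have hinter : A ∩ C.closedCell i =
      (⋃ j ∈ F.filter (C.closedCell · ⊆ A), C.closedCell j) ∩ C.closedCell i := by
    refine Subset.antisymm (fun y ⟨hyA, hyi⟩ => ⟨?_, hyi⟩)
      (inter_subset_inter_left _ (iUnion₂_subset fun j hj => (Finset.mem_filter.1 hj).2))
    obtain ⟨j, hjF, hyj⟩ := mem_iUnion₂.1 (hF hyi)
    have hjA : C.closedCell j ⊆ A := C.isSubcomplex_iff.1 hA j ⟨y, hyj, hyA⟩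
    exact mem_iUnion₂.2 ⟨j, Finset.mem_filter.2 ⟨hjF, hjA⟩, C.openCell_subset_closedCell j hyj⟩
  rw [hinter]
  exact (isClosed_biUnion_finset fun j _ => C.isClosed_closedCell j).inter
    (C.isClosed_closedCell i)

lemma LocallyLT.exists_isClopen {κ : Cardinal} (h : C.LocallyLT κ) (hκ : ℵ₀ < κ)
    (hreg : κ.IsRegular) (x : X) :
    ∃ B : Set X, IsClopen B ∧ x ∈ B ∧ #(C.cells B) < κ := by
  choose G hGcard hG using fun i =>
    h.exists_cells_lt_subset_interior hreg (C.isCompact_closedCell i)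
  obtain ⟨A, hA, hAcard, hxA⟩ := h x
  obtain ⟨S, hAS, hGS, hScard⟩ :=
    Cardinal.exists_superset_biUnion_subset_lt_of_isRegular hκ hreg G hGcard hAcard
  have hGsub : ∀ i ∈ S, interior (C.unionCells (G i)) ⊆ C.unionCells S := fun i hi =>
    interior_subset.trans (unionCells_mono ((subset_biUnion_of_mem hi).trans hGS))
  have hB : C.IsSubcomplex (C.unionCells S) := by
    refine C.isSubcomplex_iff.2 fun i ⟨y, hyi, hyB⟩ => ?_
    have hiS : i ∈ S := mem_of_mem_openCell_of_mem_unionCells hyi hyB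
    exact (hG i).trans (hGsub i hiS)
  have hBopen : IsOpen (C.unionCells S) := by
    refine subset_interior_iff_isOpen.1 fun y hy => ?_
    obtain ⟨j, hjS, hyj⟩ := mem_unionCells.1 hy
    exact interior_maximal (hGsub j hjS) isOpen_interior (hG j (C.openCell_subset_closedCell j hyj))
  refine ⟨C.unionCells S, ⟨hB.isClosed, hBopen⟩, ?_, by rwa [C.cells_unionCells]⟩
  rw [← hA.unionCells_cells] at hxA
  exact unionCells_mono hAS (interior_subset hxA)

end T2

end CWStruct

/-- For `κ` an uncountable regular cardinal, a CW complex is locally less than `κ` iff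
each connected component contains fewer than `κ` many cells. -/
theorem locallyLT_iff_components {X : Type} [TopologicalSpace X] [T2Space X]
    (κ : Cardinal) (hκ : Cardinal.aleph0 < κ) (hreg : κ.IsRegular) (C : CWStruct X) :
    C.LocallyLT κ ↔ ∀ x : X, Cardinal.mk (C.cells (connectedComponent x)) < κ := by
  refine ⟨fun h x => ?_, fun h x => ?_⟩
  · obtain ⟨B, hB, hxB, hBcard⟩ := h.exists_isClopen hκ hreg x
    have hcells : C.cells (connectedComponent x) ⊆ C.cells B :=
      fun i hi => hi.trans (hB.connectedComponent_subset hxB)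
    exact (mk_le_mk_of_subset hcells).trans_lt hBcard
  · refine ⟨connectedComponent x, C.isSubcomplex_connectedComponent x, h x, ?_⟩
    rw [(C.isOpen_connectedComponent x).interior_eq]
    exact mem_connectedComponent
end

section
/- Let W and Z be CW complexes, W′ a finite subcomplex of W, Z′ a finite subcomplex of Z, U open in W′, V open in Z′, and H a sequentially closed subset of W × Z (product topology) such that the closure of U × V is disjoint from H. Let e be a cell of Z whose boundary is contained in Z′. Then there exists p ∈ ℕ such that the closure of U × (V ∪ C^e_p(V)) is disjoint from H. -/
open Set Metric Topology

/-!
If every `closure (U ×ˢ (V ∪ C^e_p(V)))` met `H`, these closed sets, which decrease in `p` and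
lie in the sequentially compact set `W' ×ˢ (Z' ∪ ē)`, would contain points of `H` with a
convergent subsequence; its limit lies in `H` (sequentially closed) and in all of them. As
`p → ∞` the collars shrink to the image under `φ_e` of the closure of `φ_e⁻¹(V) ∩ Sᵈ`, which
lies in `closure V`, so the limit lies in `closure (U ×ˢ V)`, contradicting the hypothesis.
-/

open Filter

section

variable {X Y : Type*} [TopologicalSpace X] [TopologicalSpace Y]

theorem IsSeqCompact.union {s t : Set X} (hs : IsSeqCompact s) (ht : IsSeqCompact t) :
    IsSeqCompact (s ∪ t) := by
  intro x hx
  rcases frequently_or_distrib.mp (Frequently.of_forall (f := atTop) hx) with hxs | hxt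
  · obtain ⟨a, ha, φ, hφ⟩ := hs.subseq_of_frequently_in hxs
    exact ⟨a, Or.inl ha, φ, hφ⟩
  · obtain ⟨a, ha, φ, hφ⟩ := ht.subseq_of_frequently_in hxt
    exact ⟨a, Or.inr ha, φ, hφ⟩

theorem Set.Finite.isSeqCompact_biUnion {ι : Type*} {s : Set ι} (hs : s.Finite) {f : ι → Set X}
    (hf : ∀ i ∈ s, IsSeqCompact (f i)) : IsSeqCompact (⋃ i ∈ s, f i) := by
  intro x hx
  have hfreq : ∃ᶠ n in atTop, ∃ i ∈ s, x n ∈ f i :=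
    Frequently.of_forall fun n => by simpa only [mem_iUnion₂, exists_prop] using hx n
  obtain ⟨i, hi, hxi⟩ := hs.frequently_exists.mp hfreq
  obtain ⟨a, ha, φ, hφ⟩ := (hf i hi).subseq_of_frequently_in hxi
  exact ⟨a, mem_biUnion hi ha, φ, hφ⟩

theorem IsSeqCompact.prod {s : Set X} {t : Set Y} (hs : IsSeqCompact s) (ht : IsSeqCompact t) :
    IsSeqCompact (s ×ˢ t) := by
  intro x hx
  obtain ⟨a, ha, φ, hφ, hxa⟩ := hs fun n => (hx n).1
  obtain ⟨b, hb, ψ, hψ, hxb⟩ := ht fun n => (hx (φ n)).2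
  exact ⟨(a, b), ⟨ha, hb⟩, φ ∘ ψ, hφ.comp hψ,
    (hxa.comp hψ.tendsto_atTop).prodMk_nhds hxb⟩

theorem IsSeqCompact.image_of_continuousOn {K s : Set X} {f : X → Y} (hK : IsSeqCompact K)
    (hf : ContinuousOn f s) (hKs : K ⊆ s) : IsSeqCompact (f '' K) := by
  intro u hu
  choose v hvK hvu using hu
  obtain ⟨a, ha, φ, hφ, hva⟩ := hK hvK
  refine ⟨f a, mem_image_of_mem f ha, φ, hφ, ?_⟩
  have hfv : Tendsto (f ∘ v ∘ φ) atTop (𝓝 (f a)) :=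
    (hf a (hKs ha)).tendsto.comp
      (tendsto_nhdsWithin_iff.mpr ⟨hva, Eventually.of_forall fun n => hKs (hvK (φ n))⟩)
  exact hfv.congr fun n => hvu (φ n)

theorem IsSeqClosed.inter_iInter_nonempty_of_antitone {H K : Set X} {T : ℕ → Set X}
    (hH : IsSeqClosed H) (hK : IsSeqCompact K) (hT : Antitone T) (hTc : ∀ n, IsClosed (T n))
    (hTK : T 0 ⊆ K) (hne : ∀ n, (T n ∩ H).Nonempty) : ((⋂ n, T n) ∩ H).Nonempty := by
  choose x hxT hxH using hne
  obtain ⟨a, -, φ, hφ, hxa⟩ := hK fun n => hTK (hT (Nat.zero_le n) (hxT n))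
  refine ⟨a, mem_iInter.mpr fun m => ?_, hH (fun n => hxH (φ n)) hxa⟩
  refine (hTc m).mem_of_tendsto hxa ?_
  filter_upwards [hφ.tendsto_atTop.eventually_ge_atTop m] with n hn
  exact hT hn (hxT (φ n))

theorem ContinuousOn.iInter_image_subset_image_iInter [T2Space X] [T2Space Y] {f : X → Y}
    {s : Set X} {A : ℕ → Set X} (hf : ContinuousOn f s) (hA : Antitone A)
    (hAc : ∀ n, IsCompact (A n)) (hAs : A 0 ⊆ s) : ⋂ n, f '' A n ⊆ f '' ⋂ n, A n := by
  intro y hy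
  have hfA : ContinuousOn f (A 0) := hf.mono hAs
  have hfiber_closed : ∀ n, IsClosed (A n ∩ f ⁻¹' {y}) := fun n =>
    (hfA.mono (hA (Nat.zero_le n))).preimage_isClosed_of_isClosed (hAc n).isClosed
      isClosed_singleton
  obtain ⟨x, hx⟩ := IsCompact.nonempty_iInter_of_sequence_nonempty_isCompact_isClosed
    (fun n => A n ∩ f ⁻¹' {y}) (fun n => inter_subset_inter_left _ (hA (Nat.le_succ n)))
    (fun n => (mem_iInter.mp hy n))
    ((hAc 0).of_isClosed_subset (hfiber_closed 0) inter_subset_left) hfiber_closed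
  exact ⟨x, mem_iInter.mpr fun n => (mem_iInter.mp hx n).1, (mem_iInter.mp hx 0).2⟩

end

theorem monotone_natCast_div_natCast_add_one : Monotone fun n : ℕ => (n : ℝ) / (n + 1) := by
  intro m p hmp
  have hmp' : (m : ℝ) ≤ p := Nat.cast_le.mpr hmp
  dsimp only
  rw [div_le_div_iff₀ (by positivity) (by positivity)]
  linarith

theorem eq_one_of_forall_natCast_div_natCast_add_one_le {t : ℝ} (ht : t ≤ 1)
    (h : ∀ n : ℕ, (n : ℝ) / (n + 1) ≤ t) : t = 1 :=
  le_antisymm ht (le_of_tendsto (tendsto_natCast_div_add_atTop 1) (Eventually.of_forall h))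

theorem smul_mem_closedBall_zero_one {E : Type*} [NormedAddCommGroup E] [NormedSpace ℝ E]
    {t : ℝ} {z : E} (ht : t ∈ Icc 0 1) (hz : ‖z‖ = 1) : t • z ∈ closedBall (0 : E) 1 := by
  rw [mem_closedBall_zero_iff, norm_smul, hz, mul_one, Real.norm_of_nonneg ht.1]
  exact ht.2

namespace CellStruct

variable {X : Type} [TopologicalSpace X] (C : CellStruct X)

theorem isCompact_closedCell (i : C.ι) : IsCompact (C.closedCell i) :=
  (isCompact_closedBall 0 1).image_of_continuousOn (C.continuousOn i)

theorem isSeqCompact_closedCell (i : C.ι) : IsSeqCompact (C.closedCell i) :=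
  (isCompact_closedBall 0 1).isSeqCompact.image_of_continuousOn (C.continuousOn i) subset_rfl

theorem openCell_subset_closedCell (i : C.ι) : C.openCell i ⊆ C.closedCell i :=
  image_mono ball_subset_closedBall

end CellStruct

namespace CWStruct

variable {X : Type} [TopologicalSpace X]

namespace IsSubcomplex

variable {C : CWStruct X} {A : Set X}

theorem eq_biUnion_closedCell (hA : C.IsSubcomplex A) : A = ⋃ i ∈ C.cells A, C.closedCell i := by
  obtain ⟨⟨J, rfl⟩, hclosed⟩ := hA
  refine subset_antisymm (iUnion₂_subset fun j hj x hx => ?_) (iUnion₂_subset hclosed)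
  have hj' : C.openCell j ⊆ ⋃ j ∈ J, C.openCell j := subset_biUnion_of_mem hj
  exact mem_biUnion hj' (C.openCell_subset_closedCell j hx)

theorem isCompact (hA : C.IsSubcomplex A) (hfin : (C.cells A).Finite) : IsCompact A := by
  rw [hA.eq_biUnion_closedCell]
  exact hfin.isCompact_biUnion fun i _ => C.isCompact_closedCell i

theorem isSeqCompact (hA : C.IsSubcomplex A) (hfin : (C.cells A).Finite) : IsSeqCompact A := by
  rw [hA.eq_biUnion_closedCell]
  exact hfin.isSeqCompact_biUnion fun i _ => C.isSeqCompact_closedCell i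

end IsSubcomplex

variable (C : CWStruct X) (e : C.ι)

theorem collar_antitone (V : Set X) : Antitone fun n => C.collar e n V := by
  intro m p hmp
  refine image_mono fun q ⟨t, ht, hq⟩ => ⟨t, Ioc_subset_Ioc_left ?_ ht, hq⟩
  exact monotone_natCast_div_natCast_add_one hmp

theorem collar_subset_closedCell (n : ℕ) (V : Set X) : C.collar e n V ⊆ C.closedCell e := by
  rintro _ ⟨_, ⟨t, ht, z, hz, -, rfl⟩, rfl⟩
  exact ⟨t • z, smul_mem_closedBall_zero_one ⟨(by positivity : (0 : ℝ) ≤ n / (n + 1)).trans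
    ht.1.le, ht.2⟩ hz, rfl⟩

theorem iInter_closure_collar_subset [T2Space X] (V : Set X) :
    ⋂ n, closure (C.collar e n V) ⊆ closure V := by
  set S := sphere (0 : EuclideanSpace ℝ (Fin (C.dim e))) 1 ∩ C.map e ⁻¹' V
  set P : ℕ → Set (ℝ × EuclideanSpace ℝ (Fin (C.dim e))) := fun n =>
    Icc ((n : ℝ) / (n + 1)) 1 ×ˢ closure S
  set ψ := fun q : ℝ × EuclideanSpace ℝ (Fin (C.dim e)) => C.map e (q.1 • q.2)
  have hS : closure S ⊆ sphere 0 1 := closure_minimal inter_subset_left isClosed_sphere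
  have hP : ∀ n, P n ⊆ Icc 0 1 ×ˢ sphere 0 1 := fun n =>
    prod_mono (Icc_subset_Icc_left (by positivity)) hS
  have hψ : ContinuousOn ψ (Icc 0 1 ×ˢ sphere 0 1) :=
    (C.continuousOn e).comp continuous_smul.continuousOn fun q hq =>
      smul_mem_closedBall_zero_one hq.1 (mem_sphere_zero_iff_norm.mp hq.2)
  have hPc : ∀ n, IsCompact (P n) := fun n =>
    isCompact_Icc.prod ((isCompact_sphere 0 1).of_isClosed_subset isClosed_closure hS)
  have hPanti : Antitone P := fun m p hmp =>
    prod_mono_left (Icc_subset_Icc_left (monotone_natCast_div_natCast_add_one hmp))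
  have hcollar : ∀ n, closure (C.collar e n V) ⊆ ψ '' P n := by
    refine fun n => closure_minimal ?_ ((hPc n).image_of_continuousOn (hψ.mono (hP n))).isClosed
    rintro _ ⟨_, ⟨t, ht, z, hz, hzV, rfl⟩, rfl⟩
    exact ⟨(t, z), ⟨Ioc_subset_Icc_self ht, subset_closure ⟨mem_sphere_zero_iff_norm.mpr hz, hzV⟩⟩,
      rfl⟩
  have hlim : ψ '' ⋂ n, P n ⊆ C.map e '' closure S := by
    rintro _ ⟨⟨t, z⟩, htz, rfl⟩
    have ht : t = 1 := eq_one_of_forall_natCast_div_natCast_add_one_le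
      (mem_iInter.mp htz 0).1.2 fun n => (mem_iInter.mp htz n).1.1
    exact ⟨z, (mem_iInter.mp htz 0).2, by simp [ψ, ht]⟩
  calc ⋂ n, closure (C.collar e n V) ⊆ ⋂ n, ψ '' P n := iInter_mono hcollar
    _ ⊆ ψ '' ⋂ n, P n := hψ.iInter_image_subset_image_iInter hPanti hPc (hP 0)
    _ ⊆ C.map e '' closure S := hlim
    _ ⊆ closure (C.map e '' S) :=
      ((C.continuousOn e).mono (hS.trans sphere_subset_closedBall)).image_closure
    _ ⊆ closure V := closure_mono (image_subset_iff.mpr inter_subset_right)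

theorem iInter_closure_prod_union_collar_subset [T2Space X] {Y : Type*} [TopologicalSpace Y]
    (U : Set Y) (V : Set X) :
    ⋂ n, closure (U ×ˢ (V ∪ C.collar e n V)) ⊆ closure (U ×ˢ V) := by
  intro x hx
  simp only [mem_iInter, closure_prod_eq, closure_union, mem_prod, mem_union] at hx
  rw [closure_prod_eq]
  refine ⟨(hx 0).1, by_contra fun hV => hV ?_⟩
  exact C.iInter_closure_collar_subset e V (mem_iInter.mpr fun n => (hx n).2.resolve_left hV)

end CWStruct

theorem collar_extension_general {W Z : Type} [TopologicalSpace W] [TopologicalSpace Z]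
    [T2Space W] [T2Space Z] (CW : CWStruct W) (CZ : CWStruct Z)
    (W' : Set W) (hW'sub : CW.IsSubcomplex W') (hW'fin : (CW.cells W').Finite)
    (Z'' : Set Z) (hZ'sub : CZ.IsSubcomplex Z'') (hZ'fin : (CZ.cells Z'').Finite)
    (U : Set W) (hU : ∃ O : Set W, IsOpen O ∧ U = O ∩ W')
    (V : Set Z) (hV : ∃ O : Set Z, IsOpen O ∧ V = O ∩ Z'')
    (H : Set (W × Z)) (hH : IsSeqClosed H)
    (hdisj : Disjoint (closure (U ×ˢ V)) H)
    (e : CZ.ι) :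
    ∃ p : ℕ, Disjoint (closure (U ×ˢ (V ∪ CZ.collar e p V))) H := by
  by_contra! hmeets
  have hUW' : U ⊆ W' := by obtain ⟨O, -, rfl⟩ := hU; exact inter_subset_right
  have hVZ'' : V ⊆ Z'' := by obtain ⟨O, -, rfl⟩ := hV; exact inter_subset_right
  set K := W' ×ˢ (Z'' ∪ CZ.closedCell e)
  have hK : IsSeqCompact K := (hW'sub.isSeqCompact hW'fin).prod
    ((hZ'sub.isSeqCompact hZ'fin).union (CZ.isSeqCompact_closedCell e))
  have hKc : IsClosed K := (hW'sub.isCompact hW'fin).isClosed.prod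
    ((hZ'sub.isCompact hZ'fin).isClosed.union (CZ.isCompact_closedCell e).isClosed)
  have hT0 : closure (U ×ˢ (V ∪ CZ.collar e 0 V)) ⊆ K := closure_minimal
    (prod_mono hUW' (union_subset_union hVZ'' (CZ.collar_subset_closedCell e 0 V))) hKc
  obtain ⟨x, hxT, hxH⟩ := hH.inter_iInter_nonempty_of_antitone hK
    (fun m p hmp => closure_mono (prod_mono_right
      (union_subset_union_right V (CZ.collar_antitone e V hmp))))
    (fun _ => isClosed_closure) hT0 (fun p => not_disjoint_iff_nonempty_inter.mp (hmeets p))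
  exact disjoint_left.mp hdisj (CZ.iInter_closure_prod_union_collar_subset e U V hxT) hxH

/-- The cell-extension lemma: given finite subcomplexes `W' ⊆ W`, `Z' ⊆ Z`, relatively open
sets `U ⊆ W'`, `V ⊆ Z'`, a sequentially closed `H ⊆ W × Z` with `closure (U ×ˢ V)` disjoint
from `H`, and a cell `e` of `Z` with boundary in `Z'`, there is `p` with
`closure (U ×ˢ (V ∪ C^e_p(V)))` disjoint from `H`. -/
theorem collar_extension {W Z : Type} [TopologicalSpace W] [TopologicalSpace Z]
    [T2Space W] [T2Space Z] (CW : CWStruct W) (CZ : CWStruct Z)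
    (W' Z' : Set W) (hW'sub : CW.IsSubcomplex W') (hW'fin : (CW.cells W').Finite)
    (Z'' : Set Z) (hZ'sub : CZ.IsSubcomplex Z'') (hZ'fin : (CZ.cells Z'').Finite)
    (U : Set W) (hU : ∃ O : Set W, IsOpen O ∧ U = O ∩ W')
    (V : Set Z) (hV : ∃ O : Set Z, IsOpen O ∧ V = O ∩ Z'')
    (H : Set (W × Z)) (hH : IsSeqClosed H)
    (hdisj : Disjoint (closure (U ×ˢ V)) H)
    (e : CZ.ι) (he : CZ.sphereImage e ⊆ Z'') :
    ∃ p : ℕ, Disjoint (closure (U ×ˢ (V ∪ CZ.collar e p V))) H :=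
  collar_extension_general CW CZ W' hW'sub hW'fin Z'' hZ'sub hZ'fin U hU V hV H hH hdisj e
end
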